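/- Let ℓ ≥ 1 be an integer and let 𝒫 be a finite family of paths on the integer grid (finite nonempty subsets P ⊆ ℤ² whose induced subgraph in the grid graph on ℤ² is a path) such that for every P ∈ 𝒫 the horizontal part of P has length at most ℓ − 1, i.e., the difference between the largest and smallest x-coordinates of points of P is at most ℓ − 1. Let G be the vertex intersection graph of 𝒫 (two distinct paths adjacent if and only if they share a grid point). Then the layered tree-independence number of G is at most 4ℓ − 1. -/

import Mathlib

open Classical

/-- A tree decomposition of a graph `G`. -/
structure TreeDecomp {V : Type*} (G : SimpleGraph V) where
  ι : Type
  fin : Fintype ι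
  T : SimpleGraph ι
  isTree : T.IsTree
  bag : ι → Set V
  mem_bag : ∀ v : V, ∃ t, v ∈ bag t
  edge_bag : ∀ ⦃u v : V⦄, G.Adj u v → ∃ t, u ∈ bag t ∧ v ∈ bag t
  bag_connected : ∀ v : V, (T.induce {t | v ∈ bag t}).Connected

/-- `I` is an independent set of `G` contained in `S`, i.e. an independent set of `G[S]`. -/
def IsIndepSetIn {V : Type*} (G : SimpleGraph V) (S : Set V) (I : Finset V) : Prop :=
  ↑I ⊆ S ∧ ∀ u ∈ I, ∀ v ∈ I, u ≠ v → ¬ G.Adj u v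

/-- `α(G[S]) ≤ k`. -/
def IndepLE {V : Type*} (G : SimpleGraph V) (S : Set V) (k : ℕ) : Prop :=
  ∀ I : Finset V, IsIndepSetIn G S I → I.card ≤ k

/-- The independence number of the tree decomposition is at most `k`. -/
def TreeDecomp.IndepNumLE {V : Type*} {G : SimpleGraph V} (td : TreeDecomp G) (k : ℕ) : Prop :=
  ∀ t : td.ι, IndepLE G (td.bag t) k

/-- The tree-independence number of `G` is at most `k`. -/
def treeAlphaLE {V : Type*} (G : SimpleGraph V) (k : ℕ) : Prop :=
  ∃ td : TreeDecomp G, td.IndepNumLE k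

/-- The tree-independence number of `G`. -/
noncomputable def treeAlpha {V : Type*} (G : SimpleGraph V) : ℕ :=
  sInf {k | treeAlphaLE G k}

/-- A layering of `G`, encoded by the function sending a vertex to the index of its layer. -/
def IsLayering {V : Type*} (G : SimpleGraph V) (L : V → ℕ) : Prop :=
  ∀ ⦃u v : V⦄, G.Adj u v → (L u : ℤ) ≤ (L v : ℤ) + 1

/-- The layered tree-independence number of `G` is at most `k`. -/
def layeredTreeAlphaLE {V : Type*} (G : SimpleGraph V) (k : ℕ) : Prop :=
  ∃ (td : TreeDecomp G) (L : V → ℕ), IsLayering G L ∧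
    ∀ (t : td.ι) (i : ℕ), IndepLE G (td.bag t ∩ {v | L v = i}) k

/-- The layered tree-independence number of `G`. -/
noncomputable def layeredTreeAlpha {V : Type*} (G : SimpleGraph V) : ℕ :=
  sInf {k | layeredTreeAlphaLE G k}

/-- The number of elements of the multiset `𝒞` containing `v` (with multiplicity). -/
noncomputable def coverCount {V : Type*} (𝒞 : Multiset (Set V)) (v : V) : ℕ :=
  Multiset.countP (fun C => v ∈ C) 𝒞

/-- `𝒞` is a `β`-general cover: every vertex belongs to at least `β·|𝒞|` elements. -/
def IsGeneralCover {V : Type*} (β : ℝ) (𝒞 : Multiset (Set V)) : Prop :=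
  𝒞 ≠ 0 ∧ ∀ v : V, β * (Multiset.card 𝒞 : ℝ) ≤ (coverCount 𝒞 v : ℝ)

/-- The intersection graph of an (indexed) family of sets. -/
def intersectionGraph {ι : Type*} {α : Type*} (D : ι → Set α) : SimpleGraph ι where
  Adj i j := i ≠ j ∧ (D i ∩ D j).Nonempty
  symm := by
    constructor
    rintro i j ⟨hne, x, hx1, hx2⟩
    exact ⟨hne.symm, x, hx2, hx1⟩
  loopless := by
    constructor
    rintro i ⟨hne, -⟩
    exact hne rfl

/-- The `p`-th power of a graph. -/
def gpower {V : Type*} (G : SimpleGraph V) (p : ℕ) : SimpleGraph V where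
  Adj u v := u ≠ v ∧ ∃ w : G.Walk u v, w.length ≤ p
  symm := by
    constructor
    rintro u v ⟨hne, w, hw⟩
    exact ⟨hne.symm, w.reverse, by simpa using hw⟩
  loopless := by
    constructor
    rintro u ⟨hne, -⟩
    exact hne rfl

/-- The axis-aligned closed hypercube of side length `r` with lower corner `x`. -/
def cube (d : ℕ) (x : EuclideanSpace ℝ (Fin d)) (r : ℝ) : Set (EuclideanSpace ℝ (Fin d)) :=
  {y | ∀ i, x i ≤ y i ∧ y i ≤ x i + r}

/-- The size of an object: the side length of its smallest enclosing axis-aligned hypercube. -/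
noncomputable def objSize (d : ℕ) (O : Set (EuclideanSpace ℝ (Fin d))) : ℝ :=
  sInf {r : ℝ | 0 ≤ r ∧ ∃ x, O ⊆ cube d x r}

/-- The collection `O` is `c`-fat. -/
def IsFat {ι : Type*} (d : ℕ) (c : ℝ) (O : ι → Set (EuclideanSpace ℝ (Fin d))) : Prop :=
  ∀ r : ℝ, 0 < r → ∀ x : EuclideanSpace ℝ (Fin d), ∀ P : Finset ι,
    (∀ i ∈ P, ∀ j ∈ P, i ≠ j → Disjoint (O i) (O j)) →
    (∀ i ∈ P, (O i ∩ cube d x r).Nonempty ∧ r ≤ objSize d (O i)) →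
    ∃ pts : Finset (EuclideanSpace ℝ (Fin d)),
      (pts.card : ℝ) ≤ c ∧ ∀ i ∈ P, ∃ p ∈ pts, p ∈ O i

/-- The `n`-dimensional grid graph of width `n`. -/
def gridGraphN (n : ℕ) : SimpleGraph (Fin n → Fin n) where
  Adj a b := ∑ i, ((a i : ℤ) - (b i : ℤ)).natAbs = 1
  symm := by
    constructor
    intro a b h
    rw [← h]
    exact Finset.sum_congr rfl fun i _ => by omega
  loopless := by
    constructor
    intro a h
    simp at h

/-- The grid graph on `ℤ²`. -/
def latticeGraph : SimpleGraph (ℤ × ℤ) where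
  Adj p q := (p.1 - q.1).natAbs + (p.2 - q.2).natAbs = 1
  symm := by
    constructor
    intro p q h
    omega
  loopless := by
    constructor
    intro p h
    simp at h

/-- `P` is (the vertex set of) a path on the integer grid: a finite nonempty subset of `ℤ²`
whose induced subgraph in the grid graph is a path. -/
def IsGridPath (P : Set (ℤ × ℤ)) : Prop :=
  P.Finite ∧ P.Nonempty ∧ (latticeGraph.induce P).IsTree ∧
    ∀ v : P, ((latticeGraph.induce P).neighborSet v).ncard ≤ 2

/-!
Cut the plane into horizontal rows. Each path is connected, so the rows it meets form an
interval; hence the sets of paths through a common row are the bags of a path decomposition of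
the intersection graph. Put a path into layer `⌊m / ℓ⌋`, where `m` is its leftmost
x-coordinate: intersecting paths overlap horizontally, so their layers differ by at most one.
All paths in the same bag and layer meet the bag's row inside one window of `2ℓ - 1`
consecutive points, and independent paths meet it in distinct points, so an independent set
inside a bag and a layer has at most `2ℓ - 1 ≤ 4ℓ - 1` elements.
-/

open SimpleGraph

namespace SimpleGraph

lemma pathGraph_isBridge_of_succ {n : ℕ} {u v : Fin n} (h : u.val + 1 = v.val) :
    (pathGraph n).IsBridge s(u, v) := by
  refine isBridge_iff.2 fun ⟨p⟩ => ?_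
  obtain ⟨d, -, hd, hd'⟩ :=
    p.exists_boundary_dart (Set.Iic u) (Set.mem_Iic.2 le_rfl)
      (by rw [Set.mem_Iic, Fin.le_def]; omega)
  have hadj := d.adj
  simp only [Set.mem_Iic, Fin.le_def, not_le] at hd hd'
  rw [deleteEdges_adj, pathGraph_adj] at hadj
  have hfst : d.fst = u := Fin.ext (by omega)
  have hsnd : d.snd = v := Fin.ext (by omega)
  exact hadj.2 (by simp [hfst, hsnd])

lemma pathGraph_isAcyclic (n : ℕ) : (pathGraph n).IsAcyclic :=
  isAcyclic_iff_forall_adj_isBridge.2 fun _ _ huv => (pathGraph_adj.1 huv).elim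
    pathGraph_isBridge_of_succ fun h => Sym2.eq_swap ▸ pathGraph_isBridge_of_succ h

lemma pathGraph_isTree (n : ℕ) : (pathGraph (n + 1)).IsTree :=
  ⟨pathGraph_connected n, pathGraph_isAcyclic _⟩

lemma induce_pathGraph_connected {n : ℕ} {S : Set (Fin n)} (hne : S.Nonempty)
    (hS : S.OrdConnected) : ((pathGraph n).induce S).Connected := by
  have hreach : ∀ (k : ℕ) (u v : S), v.1.val = u.1.val + k →
      ((pathGraph n).induce S).Reachable u v := by
    intro k
    induction k with
    | zero => exact fun u v h => (Subtype.ext (Fin.ext h.symm) : u = v) ▸ Reachable.refl _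
    | succ k ih =>
      intro u v h
      let w : Fin n := ⟨u.1.val + k, by omega⟩
      have hw : w ∈ S := hS.out u.2 v.2
        ⟨Fin.le_def.2 (Nat.le_add_right _ _), Fin.le_def.2 (show u.1.val + k ≤ v.1.val by omega)⟩
      refine (ih u ⟨w, hw⟩ rfl).trans (Adj.reachable ?_)
      rw [induce_adj, pathGraph_adj]
      exact Or.inl (show u.1.val + k + 1 = v.1.val by omega)
  have := hne.to_subtype
  refine ⟨fun u v => ?_⟩
  rcases le_total u.1.val v.1.val with h | h
  · exact hreach (v.1.val - u.1.val) u v (by omega)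
  · exact (hreach (u.1.val - v.1.val) v u (by omega)).symm

lemma Walk.exists_mem_support_eq {V : Type*} {G : SimpleGraph V} {f : V → ℤ}
    (hf : ∀ ⦃u v⦄, G.Adj u v → f v ≤ f u + 1) {u v : V} (p : G.Walk u v) {t : ℤ}
    (hu : f u ≤ t) (hv : t ≤ f v) : ∃ x ∈ p.support, f x = t := by
  induction p with
  | nil => exact ⟨_, List.mem_singleton_self _, le_antisymm hu hv⟩
  | @cons a b c h p ih =>
    by_cases hb : f b ≤ t
    · obtain ⟨x, hx, hxt⟩ := ih hb hv
      exact ⟨x, List.mem_cons_of_mem _ hx, hxt⟩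
    · exact ⟨a, List.mem_cons_self, by linarith [hf h]⟩

lemma Preconnected.ordConnected_range {V : Type*} {G : SimpleGraph V} {f : V → ℤ}
    (hf : ∀ ⦃u v⦄, G.Adj u v → f v ≤ f u + 1) (hG : G.Preconnected) :
    (Set.range f).OrdConnected := by
  refine ⟨?_⟩
  rintro _ ⟨u, rfl⟩ _ ⟨v, rfl⟩ t ⟨hu, hv⟩
  obtain ⟨p⟩ := hG u v
  obtain ⟨x, -, hx⟩ := p.exists_mem_support_eq hf hu hv
  exact ⟨x, hx⟩

end SimpleGraph

lemma ordConnected_image_snd_of_preconnected {P : Set (ℤ × ℤ)}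
    (hP : (latticeGraph.induce P).Preconnected) : (Prod.snd '' P).OrdConnected := by
  rw [Set.image_eq_range]
  refine hP.ordConnected_range fun u v huv => ?_
  have : ((u : ℤ × ℤ).1 - (v : ℤ × ℤ).1).natAbs + ((u : ℤ × ℤ).2 - (v : ℤ × ℤ).2).natAbs = 1 :=
    huv
  omega

lemma exists_treeDecomp_of_intervals {ι : Type*} [Finite ι] {G : SimpleGraph ι} (R : ι → Set ℤ)
    (hne : ∀ i, (R i).Nonempty) (hfin : ∀ i, (R i).Finite) (hR : ∀ i, (R i).OrdConnected)
    (hadj : ∀ ⦃i j⦄, G.Adj i j → (R i ∩ R j).Nonempty) :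
    ∃ td : TreeDecomp G, ∀ t, ∃ y : ℤ, td.bag t = {i | y ∈ R i} := by
  obtain ⟨a, ha⟩ := (Set.finite_iUnion hfin).bddBelow
  obtain ⟨b, hb⟩ := (Set.finite_iUnion hfin).bddAbove
  have hrange : ∀ i, ∀ y ∈ R i, a ≤ y ∧ y ≤ b := fun i y hy =>
    ⟨ha (Set.mem_iUnion_of_mem i hy), hb (Set.mem_iUnion_of_mem i hy)⟩
  have hrow : ∀ i, ∀ y ∈ R i, ∃ t : Fin ((b - a).toNat + 1), a + t = y := fun i y hy => by
    have := hrange i y hy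
    exact ⟨⟨(y - a).toNat, by omega⟩, by simp only [Int.ofNat_toNat]; omega⟩
  refine ⟨⟨Fin ((b - a).toNat + 1), inferInstance, pathGraph _, pathGraph_isTree _,
    fun t => {i | a + t ∈ R i}, fun i => ?_, fun i j hij => ?_, fun i => ?_⟩,
    fun t => ⟨_, rfl⟩⟩
  · obtain ⟨y, hy⟩ := hne i
    obtain ⟨t, rfl⟩ := hrow i y hy
    exact ⟨t, hy⟩
  · obtain ⟨y, hyi, hyj⟩ := hadj hij
    obtain ⟨t, rfl⟩ := hrow i y hyi
    exact ⟨t, hyi, hyj⟩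
  · obtain ⟨y, hy⟩ := hne i
    obtain ⟨t, rfl⟩ := hrow i y hy
    refine induce_pathGraph_connected ⟨t, hy⟩ ⟨fun s hs u hu x hx => (hR i).out hs hu ?_⟩
    simp only [Set.mem_Icc, Fin.le_def] at hx ⊢
    omega

lemma exists_isLayering_of_int {V : Type*} [Finite V] {G : SimpleGraph V} (f : V → ℤ)
    (hf : ∀ ⦃u v⦄, G.Adj u v → f u ≤ f v + 1) :
    ∃ L : V → ℕ, IsLayering G L ∧ ∀ u v, L u = L v → f u = f v := by
  obtain ⟨M, hM⟩ := (Set.finite_range f).bddBelow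
  have hM' : ∀ v, M ≤ f v := fun v => hM ⟨v, rfl⟩
  refine ⟨fun v => (f v - M).toNat, fun u v huv => ?_, fun u v huv => ?_⟩
  · have := hf huv; have := hM' u; have := hM' v
    dsimp only
    omega
  · have := hM' u; have := hM' v
    dsimp only at huv
    omega

lemma IsIndepSetIn.card_le_of_inter_nonempty {ι α : Type*} {D : ι → Set α} {S : Set ι}
    {I : Finset ι} (hI : IsIndepSetIn (intersectionGraph D) S I) {X : Finset α}
    (hX : ∀ i ∈ I, (D i ∩ X).Nonempty) : I.card ≤ X.card := by
  refine Finset.card_le_card_of_forall_subsingleton (fun i x => x ∈ D i)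
    (fun i hi => (hX i hi).elim fun x hx => ⟨x, hx.2, hx.1⟩) fun x _ i hi j hj => ?_
  by_contra hne
  exact hI.2 i hi.1 j hj.1 hne ⟨hne, x, hi.2, hj.2⟩

section Window

variable {ι : Type*} {P : ι → Set (ℤ × ℤ)} {m : ι → ℤ} {l : ℕ}

lemma div_le_div_add_one_of_adj (hl : 0 < l)
    (hwin : ∀ i, ∀ p ∈ P i, m i ≤ p.1 ∧ p.1 < m i + l)
    {i j : ι} (hij : (intersectionGraph P).Adj i j) : m i / l ≤ m j / l + 1 := by
  obtain ⟨x, hxi, hxj⟩ := hij.2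
  have hl' : (l : ℤ) ≠ 0 := by omega
  calc m i / l ≤ (m j + l) / l :=
        Int.ediv_le_ediv (by omega) (by linarith [hwin i x hxi, hwin j x hxj])
    _ = m j / l + 1 := by simp [Int.add_ediv_of_dvd_right, Int.ediv_self hl']

lemma IsIndepSetIn.card_le_of_common_row (hl : 0 < l)
    (hwin : ∀ i, ∀ p ∈ P i, m i ≤ p.1 ∧ p.1 < m i + l)
    {S : Set ι} {I : Finset ι} (hI : IsIndepSetIn (intersectionGraph P) S I) (y : ℤ)
    (hy : ∀ i ∈ I, y ∈ Prod.snd '' P i) (hm : ∀ i ∈ I, ∀ j ∈ I, m i / l = m j / l) :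
    I.card ≤ 2 * l - 1 := by
  rcases I.eq_empty_or_nonempty with rfl | ⟨i₀, hi₀⟩
  · simp
  set c := m i₀ / l
  calc I.card ≤ (Finset.Ico (l * c) (l * c + (2 * l - 1)) ×ˢ {y}).card := by
        refine hI.card_le_of_inter_nonempty fun i hi => ?_
        obtain ⟨p, hp, rfl⟩ := hy i hi
        have hc : m i / l = c := hm i hi i₀ hi₀
        have h1 : l * c ≤ m i := hc ▸ Int.mul_ediv_self_le (by omega)
        have h2 : m i < l * c + l := hc ▸ Int.lt_mul_ediv_self_add (by omega)
        refine ⟨p, hp, ?_⟩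
        have := hwin i p hp
        simp only [Finset.coe_product, Finset.coe_Ico, Finset.coe_singleton, Set.mem_prod,
          Set.mem_Ico, Set.mem_singleton_iff, and_true]
        omega
    _ = 2 * l - 1 := by
      simp only [Finset.card_product, Finset.card_singleton, mul_one, Int.card_Ico]
      omega

end Window

/-- the vertex intersection graph of a finite family of grid paths, each with
horizontal part of length at most `ℓ - 1`, has layered tree-independence number at most
`4ℓ - 1`. -/
theorem stmt19 {ι : Type} [Fintype ι] (l : ℕ) (hl : 1 ≤ l)
    (P : ι → Set (ℤ × ℤ)) (hpath : ∀ i, IsGridPath (P i))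
    (hhor : ∀ i, ∀ p ∈ P i, ∀ q ∈ P i, p.1 - q.1 ≤ (l : ℤ) - 1) :
    layeredTreeAlpha (intersectionGraph P) ≤ 4 * l - 1 := by
  refine Nat.sInf_le ?_
  choose q hqP hqmin using fun i => (P i).exists_min_image Prod.fst (hpath i).1 (hpath i).2.1
  have hwin : ∀ i, ∀ p ∈ P i, (q i).1 ≤ p.1 ∧ p.1 < (q i).1 + l := fun i p hp =>
    ⟨hqmin i p hp, by linarith [hhor i p hp (q i) (hqP i)]⟩
  obtain ⟨td, hbag⟩ := exists_treeDecomp_of_intervals (G := intersectionGraph P)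
    (fun i => Prod.snd '' P i) (fun i => (hpath i).2.1.image _) (fun i => (hpath i).1.image _)
    (fun i => ordConnected_image_snd_of_preconnected (hpath i).2.2.1.connected.preconnected)
    fun i j hij => hij.2.elim fun x hx => ⟨x.2, ⟨x, hx.1, rfl⟩, ⟨x, hx.2, rfl⟩⟩
  obtain ⟨L, hL, hLeq⟩ := exists_isLayering_of_int (fun i => (q i).1 / l)
    fun i j hij => div_le_div_add_one_of_adj hl hwin hij
  refine ⟨td, L, hL, fun t k I hI => ?_⟩
  obtain ⟨y, hy⟩ := hbag t
  have := hI.card_le_of_common_row hl hwin y (fun i hi => by simpa [hy] using (hI.1 hi).1)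
    fun i hi j hj => hLeq i j ((hI.1 hi).2.trans (hI.1 hj).2.symm)
  omega
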